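/- arXiv:math/0602637 — 5 statements merged into one kernel-verified Lean document; each statement's English description precedes it below -/
import Mathlib

section
/- Let L/K be a finite Galois extension of number fields and suppose 𝓞_L is locally free over 𝒜_{L/K}, i.e., for every nonzero prime 𝔭 of 𝓞_K the localization 𝓞_{L,𝔭} is a free module of rank 1 over 𝒜_{L/K,𝔭}. Then for every nonzero ideal I of 𝓞_K there exists β ∈ 𝓞_L such that 𝒜_{L/K}·β ⊆ 𝓞_L is an 𝓞_K-submodule of full rank whose quotient T = 𝓞_L/(𝒜_{L/K}·β) satisfies I + ann_{𝓞_K}(T) = 𝓞_K (equivalently, the 𝓞_K-module index [𝓞_L : 𝒜_{L/K}·β] is coprime to I). -/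
noncomputable section

/-- The action of the group algebra `K[Gal(L/K)]` on `L`, by `K`-linear extension of the
Galois action. -/
noncomputable def galAct {K L : Type*} [Field K] [Field L] [Algebra K L]
    (x : MonoidAlgebra K (L ≃ₐ[K] L)) (a : L) : L :=
  Finsupp.sum x.coeff fun g c => algebraMap K L c * g a

/-- The associated order `𝒜_{L/K} = { x ∈ K[Gal(L/K)] | x·𝓞_L ⊆ 𝓞_L }`. -/
def assocOrder (K L : Type*) [Field K] [Field L] [Algebra K L] :
    Set (MonoidAlgebra K (L ≃ₐ[K] L)) :=
  { x | ∀ a : L, IsIntegral ℤ a → IsIntegral ℤ (galAct x a) }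

/-- The localization `𝓞_{L,𝔭}` of `𝓞_L` at a prime `𝔭` of `𝓞_K`, as a subset of `L`. -/
def locO (K L : Type*) [Field K] [Field L] [Algebra K L]
    (P : Ideal (integralClosure ℤ K)) : Set L :=
  {y | ∃ s : integralClosure ℤ K, s ∉ P ∧ IsIntegral ℤ (algebraMap K L ↑s * y)}

/-- The localization `𝒜_{L/K,𝔭}` of the associated order at a prime `𝔭` of `𝓞_K`,
as a subset of `K[Gal(L/K)]`. -/
def locA (K L : Type*) [Field K] [Field L] [Algebra K L]
    (P : Ideal (integralClosure ℤ K)) : Set (MonoidAlgebra K (L ≃ₐ[K] L)) :=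
  {x | ∃ s : integralClosure ℤ K, s ∉ P ∧ (↑s : K) • x ∈ assocOrder K L}

/-- `𝓞_L` is locally free (of rank one) over `𝒜_{L/K}`:  for every nonzero prime `𝔭` of
`𝓞_K` the localization `𝓞_{L,𝔭}` is a free `𝒜_{L/K,𝔭}`-module of rank one. -/
def IsLocallyFree (K L : Type*) [Field K] [Field L] [Algebra K L] : Prop :=
  ∀ P : Ideal (integralClosure ℤ K), P ≠ ⊥ → P.IsPrime →
    ∃ β ∈ locO K L P,
      (∀ y ∈ locO K L P, ∃ x ∈ locA K L P, galAct x β = y) ∧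
      (∀ x ∈ locA K L P, galAct x β = 0 → x = 0)

/-!
At each prime `𝔭` containing a fixed nonzero `a ∈ I`, local freeness gives `b_𝔭 ∈ 𝓞_L` with
`𝓞_L = 𝒜·b_𝔭 + 𝔭𝓞_L`. By the Chinese remainder theorem one `β ∈ 𝓞_L` is congruent to every
`b_𝔭` modulo `𝔭𝓞_L`, and since `𝒜` preserves `𝔭𝓞_L` we still have `𝓞_L = 𝒜·β + 𝔭𝓞_L`.
Nakayama's lemma for the finitely generated module `𝓞_L/𝒜·β` then yields an annihilator outside
every such `𝔭`, i.e. `ann(T) + (a) = 𝓞_K`. Choosing `a` inside an auxiliary maximal ideal as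
well forces the annihilator element `j` in `i + j = 1` to be nonzero, and `j𝓞_L ⊆ 𝒜·β` then
gives full rank.
-/

namespace Submodule

variable {R V : Type*} [CommRing R] [AddCommGroup V] [Module R V]

theorem exists_forall_sub_mem_smul {ι : Type*} [Finite ι] {I : ι → Ideal R}
    (hI : Pairwise fun i j => IsCoprime (I i) (I j)) (M : Submodule R V) {x : ι → V}
    (hx : ∀ i, x i ∈ M) :
    ∃ y ∈ M, ∀ i, y - x i ∈ I i • M := by
  classical
  have := Fintype.ofFinite ι
  choose e he using fun i => Ideal.exists_forall_sub_mem_ideal hI (Pi.single i (1 : R))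
  refine ⟨∑ j, e j • x j, sum_mem fun j _ => M.smul_mem _ (hx j), fun i => ?_⟩
  have hxi : x i = ∑ j, (Pi.single j 1 : ι → R) i • x j := by simp [Pi.single_apply]
  rw [hxi, ← Finset.sum_sub_distrib]
  exact sum_mem fun j _ => sub_smul (e j) _ (x j) ▸ smul_mem_smul (he j i) (hx j)

theorem mem_sup_smul_of_smul_mem {P : Ideal R} (hP : P.IsMaximal) {M N : Submodule R V}
    {t : R} (ht : t ∉ P) {y : V} (hy : y ∈ M) (hty : t • y ∈ N) : y ∈ N ⊔ P • M := by
  obtain ⟨u, p, hp, hup⟩ := hP.exists_inv ht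
  have hy' : y = u • t • y + p • y := by rw [smul_smul, ← add_smul, hup, one_smul]
  rw [hy']
  exact add_mem (mem_sup_left (N.smul_mem u hty)) (mem_sup_right (smul_mem_smul hp hy))

theorem colon_sup_eq_top_of_le_sup_smul {M N : Submodule R V} (hM : M.FG) {J : Ideal R}
    (h : ∀ P : Ideal R, P.IsMaximal → J ≤ P → M ≤ N ⊔ P • M) : N.colon M ⊔ J = ⊤ := by
  by_contra hne
  obtain ⟨P, hP, hle⟩ := Ideal.exists_le_maximal _ hne
  have hMq : M.map N.mkQ ≤ P • M.map N.mkQ := by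
    simpa [map_sup, map_smul''] using map_mono (f := N.mkQ) (h P hP (le_sup_right.trans hle))
  obtain ⟨r, hr1, hr⟩ := exists_sub_one_mem_and_smul_eq_zero_of_fg_of_le_smul P _ (hM.map _) hMq
  have hrN : r ∈ N.colon M := mem_colon.mpr fun y hy => by
    have hry := hr _ (mem_map_of_mem hy)
    rwa [mkQ_apply, ← Quotient.mk_smul, Quotient.mk_eq_zero] at hry
  exact hP.ne_top (P.eq_top_iff_one.mpr (by simpa using P.sub_mem (hle (mem_sup_left hrN)) hr1))

end Submodule

section AssociatedOrder

variable {K L : Type*} [Field K] [Field L] [Algebra K L]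

def galActBilin : MonoidAlgebra K (L ≃ₐ[K] L) →ₗ[K] L →ₗ[K] L :=
  Finsupp.linearCombination K (fun g : L ≃ₐ[K] L => g.toLinearMap) ∘ₗ
    (MonoidAlgebra.coeffLinearEquiv K).toLinearMap

theorem galActBilin_apply (x : MonoidAlgebra K (L ≃ₐ[K] L)) (a : L) :
    galActBilin x a = galAct x a := by
  simp [galActBilin, galAct, Finsupp.linearCombination_apply, Finsupp.sum, Algebra.smul_def]

theorem integralClosure_smul_eq_mul (r : integralClosure ℤ K) (y : L) :
    r • y = algebraMap K L r * y := by
  rw [Algebra.smul_def, IsScalarTower.algebraMap_apply (integralClosure ℤ K) K L]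
  rfl

variable (K L) in
def integralSubmodule : Submodule (integralClosure ℤ K) L where
  carrier := {y | IsIntegral ℤ y}
  add_mem' := IsIntegral.add
  zero_mem' := isIntegral_zero
  smul_mem' r y hy := by
    rw [Set.mem_ofPred, integralClosure_smul_eq_mul]
    exact (r.2.map (IsScalarTower.toAlgHom ℤ K L)).mul hy

@[simp]
theorem mem_integralSubmodule {y : L} : y ∈ integralSubmodule K L ↔ IsIntegral ℤ y := Iff.rfl

variable (K L) in
def assocOrderSubmodule : Submodule (integralClosure ℤ K) (MonoidAlgebra K (L ≃ₐ[K] L)) where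
  carrier := assocOrder K L
  add_mem' {x y} hx hy a ha := by
    rw [← galActBilin_apply, map_add, LinearMap.add_apply, galActBilin_apply, galActBilin_apply]
    exact (hx a ha).add (hy a ha)
  zero_mem' a _ := by
    rw [← galActBilin_apply, map_zero, LinearMap.zero_apply]
    exact isIntegral_zero
  smul_mem' r x hx a ha := by
    rw [← galActBilin_apply, LinearMap.map_smul_of_tower, LinearMap.smul_apply,
      integralClosure_smul_eq_mul, galActBilin_apply]
    exact (r.2.map (IsScalarTower.toAlgHom ℤ K L)).mul (hx a ha)

variable (K) in
/-- `𝒜_{L/K}·β`. -/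
def assocOrderSpan (β : L) : Submodule (integralClosure ℤ K) L :=
  (assocOrderSubmodule K L).map ((galActBilin.flip β).restrictScalars (integralClosure ℤ K))

theorem mem_assocOrderSpan {β y : L} :
    y ∈ assocOrderSpan K β ↔ ∃ x ∈ assocOrder K L, galAct x β = y := by
  simp only [assocOrderSpan, Submodule.mem_map, LinearMap.restrictScalars_apply,
    LinearMap.flip_apply, galActBilin_apply]
  rfl

theorem coe_assocOrderSpan (β : L) :
    (assocOrderSpan K β : Set L) = {y | ∃ x ∈ assocOrder K L, galAct x β = y} :=
  Set.ext fun _ => mem_assocOrderSpan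

end AssociatedOrder

section LocallyFree

variable {K L : Type*} [Field K] [Field L] [Algebra K L]

theorem map_smul_integralSubmodule_le {x : MonoidAlgebra K (L ≃ₐ[K] L)} (hx : x ∈ assocOrder K L)
    (P : Ideal (integralClosure ℤ K)) :
    (P • integralSubmodule K L).map ((galActBilin x).restrictScalars (integralClosure ℤ K)) ≤
      P • integralSubmodule K L := by
  rw [Submodule.map_smul'']
  refine Submodule.smul_mono le_rfl ?_
  rintro _ ⟨y, hy, rfl⟩
  exact (galActBilin_apply x y).symm ▸ hx y hy

theorem assocOrderSpan_le_sup_smul {P : Ideal (integralClosure ℤ K)} {β b : L}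
    (h : β - b ∈ P • integralSubmodule K L) :
    assocOrderSpan K b ≤ assocOrderSpan K β ⊔ P • integralSubmodule K L := by
  rintro _ ⟨x, hx, rfl⟩
  refine Submodule.mem_sup.mpr ⟨_, Submodule.mem_map_of_mem hx, _,
    neg_mem (map_smul_integralSubmodule_le hx P (Submodule.mem_map_of_mem h)), ?_⟩
  simp

theorem exists_integralSubmodule_le_assocOrderSpan_sup_smul (hlf : IsLocallyFree K L)
    {P : Ideal (integralClosure ℤ K)} (hP : P.IsMaximal) (hP0 : P ≠ ⊥) :
    ∃ b : L, IsIntegral ℤ b ∧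
      integralSubmodule K L ≤ assocOrderSpan K b ⊔ P • integralSubmodule K L := by
  obtain ⟨β, ⟨s, hsP, hsβ⟩, hsurj, -⟩ := hlf P hP0 hP.isPrime
  refine ⟨algebraMap K L s * β, hsβ, fun y hy => ?_⟩
  obtain ⟨x, ⟨u, huP, hux⟩, rfl⟩ :=
    hsurj y ⟨1, P.ne_top_iff_one.mp hP.ne_top, by simpa using hy⟩
  refine Submodule.mem_sup_smul_of_smul_mem hP (hP.isPrime.mul_notMem huP hsP) hy
    (mem_assocOrderSpan.mpr ⟨_, hux, ?_⟩)
  rw [integralClosure_smul_eq_mul, ← galActBilin_apply, ← galActBilin_apply, ← Algebra.smul_def,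
    map_smul, map_smul, LinearMap.smul_apply, smul_smul, Algebra.smul_def, mul_comm (s : K)]
  rfl

theorem integralSubmodule_fg [NumberField L] : (integralSubmodule K L).FG :=
  Submodule.FG.of_restrictScalars ℤ <| Module.Finite.iff_fg.mp
    (inferInstance : Module.Finite ℤ (NumberField.RingOfIntegers L))

theorem span_eq_top_of_mem_colon_integralSubmodule [NumberField L]
    {N : Submodule (integralClosure ℤ K) L} {j : integralClosure ℤ K} (hj0 : j ≠ 0)
    (hj : j ∈ N.colon (integralSubmodule K L)) :
    Submodule.span K (N : Set L) = ⊤ := by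
  have := (algebraMap K L).charZero
  refine eq_top_iff.mpr fun z _ => ?_
  obtain ⟨m, hm0, hm⟩ := exists_integral_multiples ℤ ℚ {z}
  have hjmz := Submodule.subset_span (R := K)
    (Submodule.mem_colon.mp hj _ (hm z (Finset.mem_singleton_self z)))
  have hc : (j : K) * m ≠ 0 := mul_ne_zero (by exact_mod_cast hj0) (Int.cast_ne_zero.mpr hm0)
  have hz : z = ((j : K) * m)⁻¹ • j • m • z := by
    rw [integralClosure_smul_eq_mul, ← Algebra.smul_def, ← Int.cast_smul_eq_zsmul K, smul_smul,
      smul_smul, mul_assoc, inv_mul_cancel₀ hc, one_smul]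
  rw [hz]
  exact Submodule.smul_mem _ _ hjmz

theorem exists_forall_isMaximal_integralSubmodule_le [NumberField K] (hlf : IsLocallyFree K L)
    {a : integralClosure ℤ K} (ha : a ≠ 0) :
    ∃ β : L, IsIntegral ℤ β ∧ ∀ P : Ideal (integralClosure ℤ K), P.IsMaximal → a ∈ P →
      integralSubmodule K L ≤ assocOrderSpan K β ⊔ P • integralSubmodule K L := by
  have : Ring.HasFiniteQuotients (integralClosure ℤ K) :=
    (inferInstance : Ring.HasFiniteQuotients (NumberField.RingOfIntegers K))
  set S := {P : Ideal (integralClosure ℤ K) | P.IsMaximal ∧ a ∈ P}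
  have : Finite S :=
    ((Ring.HasFiniteQuotients.finite_setOfPred_mem a ha).subset fun _ hP => hP.2).to_subtype
  have hS0 (P : S) : P.1 ≠ ⊥ := fun h => ha ((Submodule.mem_bot _).mp (h ▸ P.2.2))
  choose b hb using fun P : S =>
    exists_integralSubmodule_le_assocOrderSpan_sup_smul hlf P.2.1 (hS0 P)
  have hcop : Pairwise fun P Q : S => IsCoprime P.1 Q.1 := fun P Q hPQ =>
    Ideal.isCoprime_iff_sup_eq.mpr (P.2.1.coprime_of_ne Q.2.1 (Subtype.coe_injective.ne hPQ))
  obtain ⟨β, hβ, hβb⟩ := (integralSubmodule K L).exists_forall_sub_mem_smul hcop fun P => (hb P).1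
  refine ⟨β, hβ, fun P hP haP => ?_⟩
  let P' : S := ⟨P, hP, haP⟩
  exact (hb P').2.trans (sup_le (assocOrderSpan_le_sup_smul (hβb P')) le_sup_right)

end LocallyFree

theorem stmt6_general (K L : Type*) [Field K] [Field L] [Algebra K L]
    [NumberField K] [NumberField L]
    (hlf : IsLocallyFree K L) :
    ∀ I : Ideal (integralClosure ℤ K), I ≠ ⊥ →
      ∃ β : L, IsIntegral ℤ β ∧
        Submodule.span K {y : L | ∃ x ∈ assocOrder K L, galAct x β = y} = ⊤ ∧
        ∃ i ∈ I, ∃ j : integralClosure ℤ K,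
          (∀ y : L, IsIntegral ℤ y →
            ∃ x ∈ assocOrder K L, galAct x β = algebraMap K L ↑j * y) ∧
          i + j = 1 := by
  intro I hI
  obtain ⟨P₀, hP₀⟩ := Ideal.exists_maximal (integralClosure ℤ K)
  have hP₀0 :=
    Ring.ne_bot_of_isMaximal_of_not_isField hP₀ (NumberField.RingOfIntegers.not_isField K)
  obtain ⟨a, haIP, ha0⟩ := Submodule.exists_mem_ne_zero_of_ne_bot
    (mt Ideal.mul_eq_bot.mp (not_or.mpr ⟨hI, hP₀0⟩))
  obtain ⟨β, hβ, hgen⟩ := exists_forall_isMaximal_integralSubmodule_le hlf ha0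
  have hcolon : (assocOrderSpan K β).colon (integralSubmodule K L) ⊔ Ideal.span {a} = ⊤ :=
    Submodule.colon_sup_eq_top_of_le_sup_smul integralSubmodule_fg fun P hP haP =>
      hgen P hP ((Ideal.span_singleton_le_iff_mem P).mp haP)
  obtain ⟨j, hj, i, hi, hji⟩ := Submodule.mem_sup.mp (Submodule.eq_top_iff'.mp hcolon 1)
  have hiIP : i ∈ I * P₀ := (Ideal.span_singleton_le_iff_mem _).mpr haIP hi
  have hj0 : j ≠ 0 := by
    rintro rfl
    rw [zero_add] at hji
    subst hji
    exact hP₀.ne_top ((Ideal.eq_top_iff_one _).mpr (Ideal.mul_le_right hiIP))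
  have hspan := span_eq_top_of_mem_colon_integralSubmodule hj0 hj
  refine ⟨β, hβ, ?_, i, Ideal.mul_le_left hiIP, j, fun y hy => ?_, by rw [add_comm, hji]⟩
  · rwa [coe_assocOrderSpan] at hspan
  · obtain ⟨x, hx, hxy⟩ := mem_assocOrderSpan.mp (Submodule.mem_colon.mp hj y hy)
    exact ⟨x, hx, hxy.trans (integralClosure_smul_eq_mul j y)⟩

/-- Suppose `𝓞_L` is locally free over `𝒜_{L/K}`.  Then for every
nonzero ideal `I` of `𝓞_K` there exists `β ∈ 𝓞_L` such that `𝒜_{L/K}·β` is a full-rank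
`𝓞_K`-submodule of `𝓞_L` whose quotient `T` satisfies `I + ann_{𝓞_K}(T) = 𝓞_K`; here
`j ∈ ann_{𝓞_K}(T)` means `j·𝓞_L ⊆ 𝒜_{L/K}·β`. -/
theorem stmt6 (K L : Type*) [Field K] [Field L] [Algebra K L]
    [NumberField K] [NumberField L] [FiniteDimensional K L] [IsGalois K L]
    (hlf : IsLocallyFree K L) :
    ∀ I : Ideal (integralClosure ℤ K), I ≠ ⊥ →
      ∃ β : L, IsIntegral ℤ β ∧
        Submodule.span K {y : L | ∃ x ∈ assocOrder K L, galAct x β = y} = ⊤ ∧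
        ∃ i ∈ I, ∃ j : integralClosure ℤ K,
          (∀ y : L, IsIntegral ℤ y →
            ∃ x ∈ assocOrder K L, galAct x β = algebraMap K L ↑j * y) ∧
          i + j = 1 :=
  stmt6_general K L hlf

end
end

section
/- Let K be a number field with finite extensions L and E that are linearly disjoint over K; put F = LE, and suppose F/E is Galois (hence so is L/K) with the restriction map Gal(F/E) → Gal(L/K) an isomorphism, identifying both groups with G. Suppose 𝓞_L is locally free over 𝒜_{L/K}, 𝓞_F is locally free over 𝒜_{F/E}, and there exists α ∈ 𝓞_L such that 𝓞_F = 𝒜_{F/E}·α. Then 𝓞_L = 𝒜_{L/K}·α. -/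
noncomputable section

open IntermediateField

/-- `𝓞_L = 𝒜_{L/K}·α`. -/
def IsAssocOrderGen (K L : Type*) [Field K] [Field L] [Algebra K L] (α : L) : Prop :=
  IsIntegral ℤ α ∧
  (∀ b : L, IsIntegral ℤ b ↔ ∃ x ∈ assocOrder K L, galAct x α = b) ∧
  (∀ x ∈ assocOrder K L, galAct x α = 0 → x = 0)

/-!
Freeness of `α` over `E[Gal(F/E)]` (extended from `𝒜_{F/E}` to the whole group algebra by clearing
denominators) makes restriction `Gal(F/E) → Gal(L/K)` injective, hence bijective as `[F:E] = [L:K]`.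
Through it each `x ∈ K[Gal(L/K)]` becomes some `x̃ ∈ E[Gal(F/E)]` acting on `L ⊆ F` as `x` does, so
`x ↦ x·α` is injective on `K[Gal(L/K)]`, hence bijective by counting dimensions. Every `b ∈ 𝓞_L` is
thus `x·α`; writing also `b = y·α` with `y ∈ 𝒜_{F/E}`, freeness forces `y = x̃`, so `x` preserves
`𝓞_L ⊆ 𝓞_F`.
-/

open Module

section GalAct

variable {K L : Type*} [Field K] [Field L] [Algebra K L]

variable (K) in
def galActLinearMap (a : L) : MonoidAlgebra K (L ≃ₐ[K] L) →ₗ[K] L :=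
  Finsupp.lsum K (fun g => LinearMap.toSpanSingleton K L (g a)) ∘ₗ
    (MonoidAlgebra.coeffLinearEquiv K).toLinearMap

theorem galActLinearMap_apply (a : L) (x : MonoidAlgebra K (L ≃ₐ[K] L)) :
    galActLinearMap K a x = galAct x a := by
  simp only [galActLinearMap, LinearMap.coe_comp, LinearEquiv.coe_coe, Function.comp_apply,
    MonoidAlgebra.coeffLinearEquiv_apply, Finsupp.lsum_apply]
  exact Finsupp.sum_congr fun g _ => Algebra.smul_def _ _

theorem galAct_sub (x y : MonoidAlgebra K (L ≃ₐ[K] L)) (a : L) :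
    galAct (x - y) a = galAct x a - galAct y a := by
  simp only [← galActLinearMap_apply, map_sub]

theorem galAct_single (g : L ≃ₐ[K] L) (c : K) (a : L) :
    galAct (MonoidAlgebra.single g c) a = algebraMap K L c * g a :=
  Finsupp.sum_single_index (by simp)

theorem galAct_eq_sum [Fintype (L ≃ₐ[K] L)] (x : MonoidAlgebra K (L ≃ₐ[K] L)) (a : L) :
    galAct x a = ∑ g, algebraMap K L (x.coeff g) * g a :=
  Finsupp.sum_fintype _ _ (by simp)

theorem isIntegral_galAct {x : MonoidAlgebra K (L ≃ₐ[K] L)}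
    (hx : ∀ g, IsIntegral ℤ (x.coeff g)) {a : L} (ha : IsIntegral ℤ a) :
    IsIntegral ℤ (galAct x a) :=
  (integralClosure ℤ L).sum_mem fun g _ =>
    (integralClosure ℤ L).mul_mem ((hx g).map (IsScalarTower.toAlgHom ℤ K L))
      (ha.map (g.toAlgHom.restrictScalars ℤ))

theorem exists_zsmul_mem_assocOrder [CharZero K] [Algebra.IsAlgebraic ℚ K]
    (x : MonoidAlgebra K (L ≃ₐ[K] L)) : ∃ n : ℤ, n ≠ 0 ∧ n • x ∈ assocOrder K L := by
  have := IsLocalization.isAlgebraic ℚ (nonZeroDivisors ℤ)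
  have := Algebra.IsAlgebraic.trans ℤ ℚ K
  classical
  obtain ⟨n, hn, hint⟩ :=
    Algebra.IsAlgebraic.exists_integral_multiples ℤ (x.coeff.support.image x.coeff)
  refine ⟨n, hn, fun a ha => isIntegral_galAct (fun g => ?_) ha⟩
  by_cases hg : g ∈ x.coeff.support
  · exact hint _ (Finset.mem_image_of_mem _ hg)
  · rw [MonoidAlgebra.coeff_smul_apply, Finsupp.notMem_support_iff.mp hg, smul_zero]
    exact isIntegral_zero

theorem eq_zero_of_galAct_eq_zero [CharZero K] [Algebra.IsAlgebraic ℚ K] {α : L}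
    (hα : ∀ x ∈ assocOrder K L, galAct x α = 0 → x = 0) {x : MonoidAlgebra K (L ≃ₐ[K] L)}
    (hx : galAct x α = 0) : x = 0 := by
  obtain ⟨n, hn, hmem⟩ := exists_zsmul_mem_assocOrder x
  have : n • x = 0 := hα _ hmem <| by
    rw [← galActLinearMap_apply, map_zsmul, galActLinearMap_apply, hx, smul_zero]
  exact (smul_eq_zero.mp this).resolve_left hn

theorem finrank_monoidAlgebra [Finite (L ≃ₐ[K] L)] :
    finrank K (MonoidAlgebra K (L ≃ₐ[K] L)) = Nat.card (L ≃ₐ[K] L) := by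
  have := Fintype.ofFinite (L ≃ₐ[K] L)
  rw [(MonoidAlgebra.coeffLinearEquiv K).finrank_eq, finrank_finsupp_self, Nat.card_eq_fintype_card]

end GalAct

section Descent

variable {K L E F : Type*} [Field K] [Field L] [Field E] [Field F]
  [Algebra K L] [Algebra K E] [Algebra E F] [Algebra L F] [Algebra K F]
  [IsScalarTower K E F] [IsScalarTower K L F]

variable (K L) in
def galRestriction [Normal K L] (g : F ≃ₐ[E] F) : L ≃ₐ[K] L :=
  (g.restrictScalars K).restrictNormal L

theorem algebraMap_galRestriction_apply [Normal K L] (g : F ≃ₐ[E] F) (a : L) :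
    algebraMap L F (galRestriction K L g a) = g (algebraMap L F a) :=
  (g.restrictScalars K).restrictNormal_commutes L a

variable (E F) in
def extendCoeffs [Normal K L] [Finite (F ≃ₐ[E] F)] (x : MonoidAlgebra K (L ≃ₐ[K] L)) :
    MonoidAlgebra E (F ≃ₐ[E] F) :=
  .ofCoeff <| Finsupp.equivFunOnFinite.symm fun g =>
    algebraMap K E (x.coeff (galRestriction K L g))

theorem extendCoeffs_coeff [Normal K L] [Finite (F ≃ₐ[E] F)] (x : MonoidAlgebra K (L ≃ₐ[K] L))
    (g : F ≃ₐ[E] F) :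
    (extendCoeffs E F x).coeff g = algebraMap K E (x.coeff (galRestriction K L g)) := by
  simp [extendCoeffs]

theorem eq_zero_of_extendCoeffs_eq_zero [Normal K L] [Finite (F ≃ₐ[E] F)]
    (hρ : Function.Surjective (galRestriction K L (E := E) (F := F)))
    {x : MonoidAlgebra K (L ≃ₐ[K] L)} (hx : extendCoeffs E F x = 0) : x = 0 := by
  ext σ
  obtain ⟨g, rfl⟩ := hρ σ
  simpa [extendCoeffs_coeff] using congrArg (fun z => z.coeff g) hx

theorem algebraMap_galAct [Normal K L] [Fintype (L ≃ₐ[K] L)] [Fintype (F ≃ₐ[E] F)]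
    (hρ : Function.Bijective (galRestriction K L (E := E) (F := F)))
    (x : MonoidAlgebra K (L ≃ₐ[K] L)) (a : L) :
    algebraMap L F (galAct x a) = galAct (extendCoeffs E F x) (algebraMap L F a) := by
  rw [galAct_eq_sum, galAct_eq_sum, map_sum, ← hρ.sum_comp]
  refine Finset.sum_congr rfl fun g _ => ?_
  rw [map_mul, algebraMap_galRestriction_apply, extendCoeffs_coeff,
    ← IsScalarTower.algebraMap_apply, ← IsScalarTower.algebraMap_apply]

theorem galRestriction_injective [Normal K L] {α : L}
    (hα : ∀ y : MonoidAlgebra E (F ≃ₐ[E] F), galAct y (algebraMap L F α) = 0 → y = 0) :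
    Function.Injective (galRestriction K L (E := E) (F := F)) := by
  intro g g' h
  have hα' : g (algebraMap L F α) = g' (algebraMap L F α) := by
    rw [← algebraMap_galRestriction_apply (K := K), ← algebraMap_galRestriction_apply (K := K), h]
  have := hα (.single g 1 - .single g' 1) (by
    rw [galAct_sub, galAct_single, galAct_single, hα', sub_self])
  exact MonoidAlgebra.single_left_injective one_ne_zero (sub_eq_zero.mp this)

theorem galRestriction_bijective [IsGalois K L] [FiniteDimensional K L] [IsGalois E F]
    [FiniteDimensional E F] (hdeg : finrank E F = finrank K L) {α : L}
    (hα : ∀ y : MonoidAlgebra E (F ≃ₐ[E] F), galAct y (algebraMap L F α) = 0 → y = 0) :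
    Function.Bijective (galRestriction K L (E := E) (F := F)) :=
  (galRestriction_injective hα).bijective_of_nat_card_le (by
    rw [IsGalois.card_aut_eq_finrank, IsGalois.card_aut_eq_finrank, hdeg])

theorem isAssocOrderGen_of_isAssocOrderGen_algebraMap [IsGalois K L] [FiniteDimensional K L]
    [IsGalois E F] [FiniteDimensional E F] [CharZero E] [Algebra.IsAlgebraic ℚ E]
    (hdeg : finrank E F = finrank K L) {α : L}
    (hα : IsAssocOrderGen E F (algebraMap L F α)) : IsAssocOrderGen K L α := by
  have hfaith (y : MonoidAlgebra E (F ≃ₐ[E] F)) (hy : galAct y (algebraMap L F α) = 0) : y = 0 :=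
    eq_zero_of_galAct_eq_zero hα.2.2 hy
  have hρ := galRestriction_bijective hdeg hfaith
  have hintegral {b : L} : IsIntegral ℤ (algebraMap L F b) ↔ IsIntegral ℤ b :=
    isIntegral_algHom_iff (algebraMap L F).toIntAlgHom (algebraMap L F).injective
  have hinj : Function.Injective (galActLinearMap K α) := by
    refine (injective_iff_map_eq_zero _).mpr fun x hx => eq_zero_of_extendCoeffs_eq_zero hρ.2 ?_
    refine hfaith _ ?_
    rw [galActLinearMap_apply] at hx
    rw [← algebraMap_galAct hρ, hx, map_zero]
  have hsurj : Function.Surjective (galActLinearMap K α) :=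
    (LinearMap.injective_iff_surjective_of_finrank_eq_finrank (by
      rw [finrank_monoidAlgebra, IsGalois.card_aut_eq_finrank])).mp hinj
  refine ⟨hintegral.mp hα.1, fun b => ⟨fun hb => ?_, ?_⟩, fun x _ hx => ?_⟩
  · obtain ⟨y, hy, hyb⟩ := (hα.2.1 _).mp (hintegral.mpr hb)
    obtain ⟨x, rfl⟩ := hsurj b
    rw [galActLinearMap_apply] at hyb ⊢
    have hyx : y = extendCoeffs E F x := sub_eq_zero.mp <| hfaith _ <| by
      rw [galAct_sub, hyb, algebraMap_galAct hρ, sub_self]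
    refine ⟨x, fun a ha => ?_, rfl⟩
    rw [← hintegral, algebraMap_galAct hρ, ← hyx]
    exact hy _ (hintegral.mpr ha)
  · rintro ⟨x, hx, rfl⟩
    exact hx α (hintegral.mp hα.1)
  · exact hinj (by rwa [map_zero, galActLinearMap_apply])

end Descent

theorem finrank_sup_right_eq_of_finrank_sup_eq_mul {k Ω : Type*} [Field k] [Field Ω]
    [Algebra k Ω] {K L E : IntermediateField k Ω} (hKL : K ≤ L) (hKE : K ≤ E)
    [FiniteDimensional K (extendScalars hKE)]
    (hld : finrank K (extendScalars (hKL.trans le_sup_left : K ≤ L ⊔ E)) =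
      finrank K (extendScalars hKL) * finrank K (extendScalars hKE)) :
    finrank E (extendScalars (le_sup_right : E ≤ L ⊔ E)) = finrank K (extendScalars hKL) := by
  have htower := relfinrank_mul_relfinrank hKE (le_sup_right : E ≤ L ⊔ E)
  rw [relfinrank_eq_finrank_of_le hKE, relfinrank_eq_finrank_of_le le_sup_right,
    relfinrank_eq_finrank_of_le (hKL.trans le_sup_left), hld, mul_comm] at htower
  exact Nat.eq_of_mul_eq_mul_right finrank_pos htower

theorem stmt8_general (K L E : IntermediateField ℚ ℂ) (hKL : K ≤ L) (hKE : K ≤ E)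
    (hfinL : FiniteDimensional ℚ ↥L) (hfinE : FiniteDimensional ℚ ↥E)
    (hgalLK : IsGalois ↥K ↥(IntermediateField.extendScalars hKL))
    (hgalFE : IsGalois ↥E ↥(IntermediateField.extendScalars (le_sup_right : E ≤ L ⊔ E)))
    -- linear disjointness of `L` and `E` over `K`: `[LE : K] = [L : K]·[E : K]`
    (hld : Module.finrank ↥K
        ↥(IntermediateField.extendScalars (hKL.trans le_sup_left : K ≤ L ⊔ E)) =
      Module.finrank ↥K ↥(IntermediateField.extendScalars hKL) *
        Module.finrank ↥K ↥(IntermediateField.extendScalars hKE))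
    (α : ℂ) (hαL : α ∈ L)
    (hgenF : IsAssocOrderGen ↥E ↥(IntermediateField.extendScalars (le_sup_right : E ≤ L ⊔ E))
      ⟨α, (IntermediateField.mem_extendScalars _).mpr (SetLike.le_def.mp le_sup_left hαL)⟩) :
    IsAssocOrderGen ↥K ↥(IntermediateField.extendScalars hKL) ⟨α, hαL⟩ := by
  let : Algebra K E := (inclusion hKE).toAlgebra
  let : Algebra (extendScalars hKL) (extendScalars (le_sup_right : E ≤ L ⊔ E)) :=
    (inclusion (le_sup_left : L ≤ L ⊔ E)).toAlgebra
  let : Algebra K (extendScalars (le_sup_right : E ≤ L ⊔ E)) :=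
    (inclusion (hKL.trans le_sup_left : K ≤ L ⊔ E)).toAlgebra
  have : IsScalarTower K E (extendScalars (le_sup_right : E ≤ L ⊔ E)) :=
    .of_algebraMap_eq fun _ => rfl
  have : IsScalarTower K (extendScalars hKL) (extendScalars (le_sup_right : E ≤ L ⊔ E)) :=
    .of_algebraMap_eq fun _ => rfl
  have : FiniteDimensional ℚ (extendScalars hKL) := hfinL
  have : FiniteDimensional ℚ (extendScalars hKE) := hfinE
  have : FiniteDimensional ℚ (extendScalars (le_sup_right : E ≤ L ⊔ E)) :=
    finiteDimensional_sup L E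
  have : FiniteDimensional K (extendScalars hKL) := .of_restrictScalars_finite ℚ _ _
  have : FiniteDimensional K (extendScalars hKE) := .of_restrictScalars_finite ℚ _ _
  have : FiniteDimensional E (extendScalars (le_sup_right : E ≤ L ⊔ E)) :=
    .of_restrictScalars_finite ℚ _ _
  exact isAssocOrderGen_of_isAssocOrderGen_algebraMap
    (finrank_sup_right_eq_of_finrank_sup_eq_mul hKL hKE hld) hgenF

/-- Let `K` be a number field with finite extensions `L` and `E` that
are linearly disjoint over `K`, let `F = LE`, and suppose `F/E` and `L/K` are Galois.
Suppose `𝓞_L` and `𝓞_F` are locally free over `𝒜_{L/K}` and `𝒜_{F/E}` respectively, and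
that `α ∈ 𝓞_L` satisfies `𝓞_F = 𝒜_{F/E}·α`.  Then `𝓞_L = 𝒜_{L/K}·α`. -/
theorem stmt8 (K L E : IntermediateField ℚ ℂ) (hKL : K ≤ L) (hKE : K ≤ E)
    (hfinL : FiniteDimensional ℚ ↥L) (hfinE : FiniteDimensional ℚ ↥E)
    (hgalLK : IsGalois ↥K ↥(IntermediateField.extendScalars hKL))
    (hgalFE : IsGalois ↥E ↥(IntermediateField.extendScalars (le_sup_right : E ≤ L ⊔ E)))
    -- linear disjointness of `L` and `E` over `K`: `[LE : K] = [L : K]·[E : K]`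
    (hld : Module.finrank ↥K
        ↥(IntermediateField.extendScalars (hKL.trans le_sup_left : K ≤ L ⊔ E)) =
      Module.finrank ↥K ↥(IntermediateField.extendScalars hKL) *
        Module.finrank ↥K ↥(IntermediateField.extendScalars hKE))
    (hlfL : IsLocallyFree ↥K ↥(IntermediateField.extendScalars hKL))
    (hlfF : IsLocallyFree ↥E ↥(IntermediateField.extendScalars (le_sup_right : E ≤ L ⊔ E)))
    (α : ℂ) (hαL : α ∈ L)
    (hgenF : IsAssocOrderGen ↥E ↥(IntermediateField.extendScalars (le_sup_right : E ≤ L ⊔ E))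
      ⟨α, (IntermediateField.mem_extendScalars _).mpr (SetLike.le_def.mp le_sup_left hαL)⟩) :
    IsAssocOrderGen ↥K ↥(IntermediateField.extendScalars hKL) ⟨α, hαL⟩ :=
  stmt8_general K L E hKL hKE hfinL hfinE hgalLK hgalFE hld α hαL hgenF

end
end

section
/- Let L/K be a finite abelian Galois extension of number fields with Galois group G of exponent n, and fix an embedding of L(ζ_n) into ℂ. Then for every α ∈ 𝓞_L, the discriminant over K of the family (g(α))_{g∈G} equals the square of the product of all resolvents: Disc({g(α) : g ∈ G}/𝓞_K) = ∏_{χ ∈ Ĝ} ⟨α|χ⟩², where the product runs over all characters χ of G and the equality holds in L(ζ_n) (viewing K inside L(ζ_n)). -/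
/-!
Through the embeddings `h : Gal(L/K)` of `L` into `ℂ`, the discriminant of `(g α)_g` is
`det (f (h * g))_{g,h} ^ 2` with `f g = g α`. This matrix sends a character `χ`, read as a vector,
to `S χ • χ⁻¹` with `S χ = ∑ₜ χ t · f t`; so its square is diagonal, with eigenvalues
`S χ · S χ⁻¹`, in the basis of characters (Dedekind independence and `|Ĝ| = |G|`).
As `S χ⁻¹ = ⟨α|χ⟩`, the determinant of the square is `∏_χ ⟨α|χ⟩²`.
-/

noncomputable section

open scoped Classical

open IntermediateField

noncomputable def zetaC (n : ℕ) : ℂ := Complex.exp (2 * Real.pi * Complex.I / n)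

/-- The resolvent `⟨α|χ⟩ = Σ_{g ∈ Gal(L/K)} χ(g⁻¹)·g(α) ∈ ℂ` attached to `α ∈ L` and a
character `χ` of `Gal(L/K)`, for subfields `K ⊆ L` of `ℂ`. -/
noncomputable def resolventC {K : IntermediateField ℚ ℂ} (L : IntermediateField ↥K ℂ)
    (α : ↥L) (χ : (↥L ≃ₐ[↥K] ↥L) →* ℂˣ) : ℂ :=
  ∑ᶠ g : ↥L ≃ₐ[↥K] ↥L, ((χ g⁻¹ : ℂˣ) : ℂ) * ((g α : ↥L) : ℂ)

theorem LinearMap.det_eq_prod_of_apply_basis_eq_smul {ι R M : Type*} [CommRing R]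
    [AddCommGroup M] [Module R M] [Fintype ι] [DecidableEq ι] (b : Module.Basis ι R M)
    {f : M →ₗ[R] M} {c : ι → R} (h : ∀ i, f (b i) = c i • b i) :
    LinearMap.det f = ∏ i, c i := by
  have hdiag : LinearMap.toMatrix b b f = Matrix.diagonal c := by
    ext i j
    rw [LinearMap.toMatrix_apply, h, map_smul, b.repr_self, Matrix.diagonal_apply]
    by_cases hij : i = j <;> simp [hij]
  rw [← LinearMap.det_toMatrix b, hdiag, Matrix.det_diagonal]

def mulMatrix {G F : Type*} [Mul G] (f : G → F) : Matrix G G F :=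
  Matrix.of fun g h => f (h * g)

section Characters

open Matrix

variable {G F : Type*} [CommGroup G] [Field F]

theorem linearIndependent_units_monoidHom :
    LinearIndependent F (fun χ : G →* Fˣ => fun g => (χ g : F)) :=
  (linearIndependent_monoidHom G F).comp (fun χ => (Units.coeHom F).comp χ)
    fun _ _ h => MonoidHom.ext fun g => Units.ext (DFunLike.congr_fun h g)

variable [Fintype G]

theorem mulMatrix_mulVec_units_monoidHom (f : G → F) (χ : G →* Fˣ) :
    mulMatrix f *ᵥ (fun g => (χ g : F)) =
      (∑ t, (χ t : F) * f t) • fun g => (χ⁻¹ g : F) := by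
  ext g
  simp only [mulMatrix, mulVec, dotProduct, of_apply, Pi.smul_apply, smul_eq_mul,
    Finset.sum_mul]
  refine Fintype.sum_equiv (Equiv.mulRight g) _ _ fun h => ?_
  simp only [Equiv.coe_mulRight, map_mul, Units.val_mul, MonoidHom.inv_apply]
  rw [mul_right_comm _ (f (h * g)), Units.mul_inv_cancel_right, mul_comm]

variable [Fintype (G →* Fˣ)] [HasEnoughRootsOfUnity F (Monoid.exponent G)]

def characterBasis : Module.Basis (G →* Fˣ) F (G → F) :=
  basisOfLinearIndependentOfCardEqFinrank' _ linearIndependent_units_monoidHom <| by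
    rw [Module.finrank_fintype_fun_eq_card, Fintype.card_eq_nat_card, Fintype.card_eq_nat_card,
      CommGroup.card_monoidHom_of_hasEnoughRootsOfUnity]

theorem characterBasis_apply (χ : G →* Fˣ) : characterBasis χ = fun g => (χ g : F) := by
  simp [characterBasis]

theorem det_mulMatrix_sq (f : G → F) :
    (mulMatrix f).det ^ 2 = ∏ χ : G →* Fˣ, (∑ g, (χ g⁻¹ : F) * f g) ^ 2 := by
  let S (χ : G →* Fˣ) : F := ∑ t, (χ t : F) * f t
  have hM (χ : G →* Fˣ) :
      mulMatrix f *ᵥ characterBasis χ = S χ • characterBasis χ⁻¹ := by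
    rw [characterBasis_apply, characterBasis_apply]
    exact mulMatrix_mulVec_units_monoidHom f χ
  have hM2 (χ : G →* Fˣ) :
      toLin' (mulMatrix f * mulMatrix f) (characterBasis χ) =
        (S χ * S χ⁻¹) • characterBasis χ := by
    rw [toLin'_apply, ← mulVec_mulVec, hM, mulVec_smul, hM, smul_smul,
      show χ⁻¹⁻¹ = χ from inv_inv χ]
  calc (mulMatrix f).det ^ 2 = ∏ χ, S χ * S χ⁻¹ := by
        rw [sq, ← det_mul, ← LinearMap.det_toLin',
          LinearMap.det_eq_prod_of_apply_basis_eq_smul characterBasis hM2]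
    _ = ∏ χ : G →* Fˣ, (∑ g, (χ g⁻¹ : F) * f g) ^ 2 := by
        rw [Finset.prod_mul_distrib, ← Equiv.prod_comp (Equiv.inv (G →* Fˣ)) S,
          Equiv.inv_apply, ← sq, ← Finset.prod_pow]
        simp [S]

end Characters

theorem Algebra.discr_galois_orbit_eq_det_mulMatrix_sq {K L E : Type*} [Field K] [Field L]
    [Field E] [Algebra K L] [Algebra K E] [Algebra L E] [IsScalarTower K L E] [IsAlgClosed E]
    [FiniteDimensional K L] [IsGalois K L] (α : L) :
    algebraMap K E (Algebra.discr K fun g : L ≃ₐ[K] L => g α) =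
      (mulMatrix fun g : L ≃ₐ[K] L => algebraMap L E (g α)).det ^ 2 := by
  rw [Algebra.discr_eq_det_embeddingsMatrixReindex_pow_two K E _
    (Normal.algHomEquivAut K E L).symm]
  rfl

theorem stmt9_general (K : IntermediateField ℚ ℂ) (L : IntermediateField ↥K ℂ)
    [FiniteDimensional ↥K ↥L] [IsGalois ↥K ↥L]
    (hab : ∀ σ τ : ↥L ≃ₐ[↥K] ↥L, σ * τ = τ * σ)
    (α : ↥L) :
    ((Algebra.discr ↥K (fun g : ↥L ≃ₐ[↥K] ↥L => g α) : ↥K) : ℂ) =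
      ∏ᶠ χ : (↥L ≃ₐ[↥K] ↥L) →* ℂˣ, (resolventC L α χ) ^ 2 := by
  let _ : CommGroup (↥L ≃ₐ[↥K] ↥L) :=
    { (inferInstance : Group (↥L ≃ₐ[↥K] ↥L)) with mul_comm := hab }
  have : NeZero (Monoid.exponent (↥L ≃ₐ[↥K] ↥L)) := ⟨Monoid.exponent_ne_zero_of_finite⟩
  let _ := Fintype.ofFinite ((↥L ≃ₐ[↥K] ↥L) →* ℂˣ)
  rw [← IntermediateField.algebraMap_apply, Algebra.discr_galois_orbit_eq_det_mulMatrix_sq,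
    det_mulMatrix_sq, finprod_eq_prod_of_fintype]
  simp only [resolventC, finsum_eq_sum_of_fintype]
  rfl

/-- Let `L/K` be a finite abelian Galois extension of number fields
(inside `ℂ`) whose Galois group has exponent `n`.  Then for every `α ∈ 𝓞_L`,
`Disc({g(α) : g ∈ G}/𝓞_K) = ∏_{χ ∈ Ĝ} ⟨α|χ⟩²`, the product running over all characters
of `G` and the equality taking place in `ℂ` (which contains `L(ζ_n)`). -/
theorem stmt9 (K : IntermediateField ℚ ℂ) (L : IntermediateField ↥K ℂ)
    [FiniteDimensional ↥K ↥L] [IsGalois ↥K ↥L]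
    (hab : ∀ σ τ : ↥L ≃ₐ[↥K] ↥L, σ * τ = τ * σ)
    (n : ℕ) (hn : Monoid.exponent (↥L ≃ₐ[↥K] ↥L) = n)
    (α : ↥L) (hα : IsIntegral ℤ α) :
    ((Algebra.discr ↥K (fun g : ↥L ≃ₐ[↥K] ↥L => g α) : ↥K) : ℂ) =
      ∏ᶠ χ : (↥L ≃ₐ[↥K] ↥L) →* ℂˣ, (resolventC L α χ) ^ 2 :=
  stmt9_general K L hab α

end
end

section
/- Let p be an odd prime, let k ≥ 2 be an integer, and let ζ be a primitive p^k-th root of unity in ℂ. Then the sum of ζ^{t²} over all integers t with 0 ≤ t ≤ p^k − 1 and gcd(t, p) = 1 is zero: Σ_{0 ≤ t ≤ p^k−1, gcd(p,t)=1} ζ^{t²} = 0. -/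
noncomputable section

/-- Corollary of Gauss's theorem.  Let `p` be an odd prime, `k ≥ 2`,
and `ζ` a primitive `p^k`-th root of unity in `ℂ`.  Then
`Σ_{0 ≤ t ≤ p^k − 1, gcd(p,t) = 1} ζ^{t²} = 0`. -/
theorem stmt12 (p k : ℕ) (hp : p.Prime) (hodd : p ≠ 2) (hk : 2 ≤ k)
    (ζ : ℂ) (hζ : IsPrimitiveRoot ζ (p ^ k)) :
    ∑ t ∈ (Finset.range (p ^ k)).filter (fun t => Nat.gcd p t = 1), ζ ^ (t ^ 2) = 0 := by
  have hppos : 0 < p := hp.pos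
  set c : ℕ := p ^ (k - 1) with hc
  have hcpos : 0 < c := pow_pos hppos _
  have hcp : c * p = p ^ k := by
    rw [hc, ← pow_succ]
    congr 1
    omega
  have hpc : p ∣ c := dvd_pow_self p (by omega)
  -- reindex the sum over pairs (a, m) with t = a + c * m
  have key : ∑ t ∈ (Finset.range (p ^ k)).filter (fun t => Nat.gcd p t = 1), ζ ^ (t ^ 2)
      = ∑ x ∈ ((Finset.range c).filter (fun a => Nat.gcd p a = 1)) ×ˢ Finset.range p,
          ζ ^ ((x.1 + c * x.2) ^ 2) := by
    refine Finset.sum_nbij' (fun t => (t % c, t / c)) (fun x => x.1 + c * x.2) ?_ ?_ ?_ ?_ ?_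
    · intro t ht
      simp only [Finset.mem_filter, Finset.mem_range] at ht
      simp only [Finset.mem_product, Finset.mem_filter, Finset.mem_range]
      refine ⟨⟨Nat.mod_lt _ hcpos, ?_⟩, ?_⟩
      · exact (hp.coprime_iff_not_dvd).mpr fun h =>
          ((hp.coprime_iff_not_dvd).mp ht.2) ((Nat.dvd_mod_iff hpc).mp h)
      · rw [Nat.div_lt_iff_lt_mul hcpos, mul_comm, hcp]
        exact ht.1
    · intro x hx
      simp only [Finset.mem_product, Finset.mem_filter, Finset.mem_range] at hx
      simp only [Finset.mem_filter, Finset.mem_range]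
      constructor
      · calc x.1 + c * x.2 < c + c * x.2 := by omega
          _ = c * (x.2 + 1) := by ring
          _ ≤ c * p := by exact Nat.mul_le_mul_left c hx.2
          _ = p ^ k := hcp
      · rw [(hp.coprime_iff_not_dvd).mpr]
        intro h
        exact ((hp.coprime_iff_not_dvd).mp hx.1.2)
          ((Nat.dvd_add_right (hpc.mul_right x.2)).mp (by rwa [Nat.add_comm] at h))
    · intro t ht
      exact Nat.mod_add_div t c
    · intro x hx
      simp only [Finset.mem_product, Finset.mem_filter, Finset.mem_range] at hx
      have h1 : (x.1 + c * x.2) % c = x.1 := by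
        rw [Nat.add_mul_mod_self_left, Nat.mod_eq_of_lt hx.1.1]
      have h2 : (x.1 + c * x.2) / c = x.2 := by
        rw [Nat.add_mul_div_left _ _ hcpos, Nat.div_eq_of_lt hx.1.1]
        omega
      simp [h1, h2]
    · intro t ht
      rw [Nat.mod_add_div t c]
  rw [key, Finset.sum_product]
  apply Finset.sum_eq_zero
  intro a ha
  simp only [Finset.mem_filter, Finset.mem_range] at ha
  -- ω = ζ^c is a primitive p-th root of unity
  have hω : IsPrimitiveRoot (ζ ^ c) p := hζ.pow (pow_pos hppos k) hcp.symm
  have hone : ζ ^ (p ^ k) = 1 := hζ.pow_eq_one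
  have hksub : k ≤ 2 * (k - 1) := by omega
  -- expand the square
  have expand : ∀ m : ℕ, ζ ^ ((a + c * m) ^ 2) = ζ ^ (a ^ 2) * ((ζ ^ c) ^ (2 * a)) ^ m := by
    intro m
    have e1 : (a + c * m) ^ 2 = a ^ 2 + c * (2 * a) * m + p ^ k * (p ^ (2 * (k - 1) - k) * m ^ 2) := by
      have : c * c = p ^ k * p ^ (2 * (k - 1) - k) := by
        rw [hc, ← pow_add, ← pow_add]
        congr 1
        omega
      calc (a + c * m) ^ 2 = a ^ 2 + c * (2 * a) * m + (c * c) * m ^ 2 := by ring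
        _ = a ^ 2 + c * (2 * a) * m + p ^ k * (p ^ (2 * (k - 1) - k) * m ^ 2) := by
            rw [this]; ring
    rw [e1, pow_add, pow_add, pow_mul ζ (p ^ k), hone, one_pow, mul_one,
      pow_mul ζ (c * (2 * a)) m, pow_mul ζ c (2 * a)]
  simp only [expand]
  rw [← Finset.mul_sum]
  have hx1 : (ζ ^ c) ^ (2 * a) ≠ 1 := by
    intro h
    have := (hω.pow_eq_one_iff_dvd (2 * a)).mp h
    rcases (Nat.Prime.dvd_mul hp).mp this with h2 | h2
    · exact hodd ((Nat.prime_dvd_prime_iff_eq hp Nat.prime_two).mp h2)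
    · exact (hp.coprime_iff_not_dvd).mp ha.2 h2
  have hxp : ((ζ ^ c) ^ (2 * a)) ^ p = 1 := by
    rw [← pow_mul, ← pow_mul]
    have h1 : c * (2 * a * p) = p ^ k * (2 * a) := by rw [← hcp]; ring
    rw [h1, pow_mul, hone, one_pow]
  rw [geom_sum_eq hx1 p, hxp, sub_self, zero_div, mul_zero]

end
end

section
/- Let p be an odd prime and let a, b, c, d, e, k be integers with d ≥ 2, e ≥ 1, k ≥ 1, gcd(c, p) = 1, and assume e ≥ 2 if p = 3. Let ζ be a primitive p^k-th root of unity and define g(t) = a + bt + c·Σ_{j=2}^{d} C(t, j)·p^{(j−2)e}, where C(t, j) denotes the binomial coefficient. Then Norm_{ℚ(ζ_{p^k})/ℚ}( Σ_{t=0}^{p^k−1} ζ^{g(t)} ) = p^{(1/2)·k·(p−1)·p^{k−1}}. -/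
/-!
Write `N = p ^ k` and `g` for the exponent. `g` is `N`-periodic, and for `0 < u < N` with
`v_p(u) = s` and `δ = p ^ (k - s - 1)` the second difference
`g (t + δ + u) - g (t + δ) - (g (t + u) - g t)` is congruent mod `N` to `c u δ ≢ 0`, whatever `t`
is: the `j = 2` term of `g` contributes exactly `u δ`, while for `j ≥ 3` the factor
`p ^ ((j - 2) e)` outweighs the loss in `v_p (C(u, i)) ≥ v_p(u) - v_p(i)`, since
`v_p(i) ≤ (i - 1) / 2` for `p ≥ 3`. So `t ↦ ξ ^ (g (t + u) - g t)` gets multiplied by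
`ξ ^ (c u δ) ≠ 1` under `t ↦ t + δ` and sums to zero, and Weyl differencing gives
`σ S * conj (σ S) = N` for every embedding `σ` of `ℚ(ζ)` into `ℂ`. No embedding is real, so
pairing `σ` with `conj ∘ σ` gives `Norm S = N ^ (φ(N) / 2)`.
-/

noncomputable section

open IntermediateField

theorem IF.zpow_mem (F : IntermediateField ℚ ℂ) {x : ℂ} (hx : x ∈ F) (n : ℤ) :
    x ^ n ∈ F :=
  F.toSubfield.zpow_mem hx n

open Finset ComplexConjugate

def secondDiff (g : ℕ → ℤ) (δ u t : ℕ) : ℤ :=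
  g (t + δ + u) - g (t + δ) - (g (t + u) - g t)

theorem Function.Periodic.sum_range_add {M : Type*} [AddCancelCommMonoid M] {f : ℕ → M}
    {N : ℕ} (hf : Function.Periodic f N) (r : ℕ) :
    ∑ t ∈ range N, f (t + r) = ∑ t ∈ range N, f t := by
  induction r with
  | zero => rfl
  | succ r ih =>
    rw [← ih]
    have h := (sum_range_succ' (fun t => f (t + r)) N).symm.trans (sum_range_succ _ N)
    rw [zero_add, add_comm N r, hf r] at h
    simpa only [add_assoc, add_comm 1 r] using add_right_cancel h

theorem Function.Periodic.sum_range_eq_zero_of_add_eq_mul {R : Type*} [CommRing R]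
    [NoZeroDivisors R] {f : ℕ → R} {N δ : ℕ} {w : R} (hf : Function.Periodic f N)
    (hshift : ∀ t, f (t + δ) = w * f t) (hw : w ≠ 1) : ∑ t ∈ range N, f t = 0 := by
  have h : ∑ t ∈ range N, f t = w * ∑ t ∈ range N, f t :=
    calc ∑ t ∈ range N, f t = ∑ t ∈ range N, f (t + δ) := (hf.sum_range_add δ).symm
      _ = w * ∑ t ∈ range N, f t := by rw [mul_sum]; exact sum_congr rfl fun t _ => hshift t
  have h' : (1 - w) * ∑ t ∈ range N, f t = 0 := by linear_combination h
  exact (mul_eq_zero.mp h').resolve_left (sub_ne_zero.mpr hw.symm)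

theorem IsPrimitiveRoot.zpow_eq_zpow_of_modEq {M₀ : Type*} [CommGroupWithZero M₀] {ξ : M₀}
    {N : ℕ} (hξ : IsPrimitiveRoot ξ N) {a b : ℤ} (h : a ≡ b [ZMOD N]) : ξ ^ a = ξ ^ b := by
  obtain rfl | hN := eq_or_ne N 0
  · rw [Int.ModEq, Nat.cast_zero, Int.emod_zero, Int.emod_zero] at h
    rw [h]
  rw [← sub_add_cancel a b, zpow_add₀ (hξ.ne_zero hN),
    (hξ.zpow_eq_one_iff_dvd _).mpr (Int.ModEq.dvd h.symm), one_mul]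

theorem IsPrimitiveRoot.conj_eq_inv {ξ : ℂ} {N : ℕ} (hξ : IsPrimitiveRoot ξ N) (hN : N ≠ 0) :
    conj ξ = ξ⁻¹ :=
  (Complex.inv_eq_conj (Complex.norm_eq_one_of_pow_eq_one hξ.pow_eq_one hN)).symm

theorem IsPrimitiveRoot.conj_ne_self {ξ : ℂ} {N : ℕ} (hξ : IsPrimitiveRoot ξ N) (hN : 2 < N) :
    conj ξ ≠ ξ := by
  intro h
  have hinv : ξ⁻¹ = ξ := (hξ.conj_eq_inv (by omega)).symm.trans h
  have hsq : ξ ^ 2 = 1 := by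
    rw [sq]
    nth_rw 2 [← hinv]
    exact mul_inv_cancel₀ (hξ.ne_zero (by omega))
  have := Nat.le_of_dvd two_pos (hξ.dvd_of_pow_eq_one 2 hsq)
  omega

theorem IsPrimitiveRoot.sum_zpow_mul_conj_eq {ξ : ℂ} {N : ℕ} (hξ : IsPrimitiveRoot ξ N)
    {g : ℕ → ℤ} (hper : ∀ t, g (t + N) ≡ g t [ZMOD N])
    (hdiff : ∀ u, 0 < u → u < N → ∃ δ D, ¬ (N : ℤ) ∣ D ∧ ∀ t, secondDiff g δ u t ≡ D [ZMOD N]) :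
    (∑ t ∈ range N, ξ ^ g t) * conj (∑ t ∈ range N, ξ ^ g t) = N := by
  obtain rfl | hN := eq_or_ne N 0
  · simp
  have hξ0 := hξ.ne_zero hN
  have hvanish : ∀ u ∈ range N, u ≠ 0 → ∑ t ∈ range N, ξ ^ (g (t + u) - g t) = 0 := by
    intro u hu hu0
    obtain ⟨δ, D, hD, hδ⟩ := hdiff u (Nat.pos_of_ne_zero hu0) (mem_range.mp hu)
    refine Function.Periodic.sum_range_eq_zero_of_add_eq_mul (δ := δ) (w := ξ ^ D)
      (fun t => ?_) (fun t => ?_) fun h => hD ((hξ.zpow_eq_one_iff_dvd D).mp h)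
    · refine hξ.zpow_eq_zpow_of_modEq ?_
      rw [add_right_comm]
      exact (hper _).sub (hper _)
    · rw [← zpow_add₀ hξ0]
      refine hξ.zpow_eq_zpow_of_modEq ?_
      have := (hδ t).add_right (g (t + u) - g t)
      rwa [secondDiff, sub_add_cancel] at this
  calc (∑ t ∈ range N, ξ ^ g t) * conj (∑ t ∈ range N, ξ ^ g t)
      = ∑ t' ∈ range N, ∑ t ∈ range N, ξ ^ (g t - g t') := by
        rw [map_sum, sum_mul_sum, sum_comm]
        refine sum_congr rfl fun t' _ => sum_congr rfl fun t _ => ?_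
        rw [map_zpow₀, hξ.conj_eq_inv hN, inv_zpow', zpow_sub₀ hξ0, div_eq_mul_inv, zpow_neg]
    _ = ∑ t' ∈ range N, ∑ u ∈ range N, ξ ^ (g (u + t') - g t') := by
        refine sum_congr rfl fun t' _ => (Function.Periodic.sum_range_add (fun t => ?_) t').symm
        exact hξ.zpow_eq_zpow_of_modEq ((hper t).sub_right _)
    _ = ∑ u ∈ range N, ∑ t ∈ range N, ξ ^ (g (t + u) - g t) := by
        rw [sum_comm]
        simp only [add_comm]
    _ = N := by
        rw [sum_eq_single_of_mem 0 (mem_range.mpr (Nat.pos_of_ne_zero hN)) hvanish]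
        simp

theorem Algebra.algebraMap_norm_eq_sqrt_pow_of_mul_conj {K : Type*} [Field K] [Algebra ℚ K]
    [FiniteDimensional ℚ K] (x : K) {n : ℝ} (hn : 0 < n)
    (hx : ∀ σ : K →ₐ[ℚ] ℂ, σ x * conj (σ x) = n)
    (hσ : ∀ σ : K →ₐ[ℚ] ℂ, (Complex.conjAe.toAlgHom.restrictScalars ℚ).comp σ ≠ σ) :
    algebraMap ℚ ℂ (Algebra.norm ℚ x) = ((√n : ℝ) : ℂ) ^ Module.finrank ℚ K := by
  have hs : ((√n : ℝ) : ℂ) * (√n : ℝ) = n := by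
    rw [← Complex.ofReal_mul, Real.mul_self_sqrt hn.le]
  have hs0 : ((√n : ℝ) : ℂ) ≠ 0 := by exact_mod_cast (Real.sqrt_pos.mpr hn).ne'
  have hprod : ∏ σ : K →ₐ[ℚ] ℂ, σ x / (√n : ℝ) = 1 := by
    refine prod_ninvolution (fun σ => (Complex.conjAe.toAlgHom.restrictScalars ℚ).comp σ)
      (fun σ => ?_) (fun σ _ => hσ σ) (fun σ => mem_univ _)
      (fun σ => AlgHom.ext fun y => Complex.conj_conj (σ y))
    change σ x / (√n : ℝ) * (conj (σ x) / (√n : ℝ)) = 1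
    rw [div_mul_div_comm, hx, hs, div_self (by exact_mod_cast hn.ne')]
  rw [prod_div_distrib, div_eq_one_iff_eq (prod_ne_zero_iff.mpr fun _ _ => hs0), prod_const,
    card_univ, AlgHom.card] at hprod
  rw [Algebra.norm_eq_prod_embeddings, hprod]

theorem Nat.two_mul_factorization_add_one_le {p n : ℕ} (hp : 3 ≤ p) (hn : n ≠ 0) :
    2 * n.factorization p + 1 ≤ n := by
  set v := n.factorization p
  have hbern : (1 + v * 2 : ℤ) ≤ (1 + 2) ^ v := one_add_mul_le_pow (by norm_num) v
  have h3p : 3 ^ v ≤ p ^ v := Nat.pow_le_pow_left hp v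
  have hpn : p ^ v ≤ n := Nat.le_of_dvd (Nat.pos_of_ne_zero hn) (Nat.ordProj_dvd n p)
  have : 1 + v * 2 ≤ 3 ^ v := by exact_mod_cast hbern
  omega

theorem Nat.Prime.pow_dvd_pow_factorization_mul_choose {p s u i : ℕ} (hp : p.Prime)
    (hu : p ^ s ∣ u) (hi : i ≠ 0) : p ^ s ∣ p ^ i.factorization p * u.choose i := by
  obtain ⟨i, rfl⟩ := Nat.exists_eq_add_one_of_ne_zero hi
  rcases u with _ | u
  · rw [Nat.choose_zero_succ, mul_zero]
    exact dvd_zero _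
  -- `(u + 1) C(u, i) = C(u + 1, i + 1) (i + 1)`, and the `p`-free part of `i + 1` is prime to `p`
  have hdvd : p ^ s ∣ (u + 1).choose (i + 1) * (i + 1) := by
    rw [← Nat.add_one_mul_choose_eq]
    exact hu.mul_right _
  have hcop : (p ^ s).Coprime ((i + 1) / p ^ (i + 1).factorization p) :=
    (Nat.coprime_ordCompl hp hi).pow_left s
  refine hcop.dvd_of_dvd_mul_right ?_
  rwa [mul_comm (p ^ _), mul_assoc, Nat.ordProj_mul_ordCompl_eq_self]

theorem Nat.cast_choose_add_sub_cast_choose (t u j : ℕ) :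
    ((t + u).choose j : ℤ) - t.choose j =
      ∑ i ∈ range j, (u.choose (i + 1) : ℤ) * t.choose (j - (i + 1)) := by
  rw [add_comm t u, Nat.add_choose_eq,
    Finset.Nat.sum_antidiagonal_eq_sum_range_succ (fun i m => u.choose i * t.choose m),
    sum_range_succ']
  push_cast
  simp

theorem secondDiff_cast_choose (δ u j t : ℕ) :
    secondDiff (fun t => (t.choose j : ℤ)) δ u t =
      ∑ i ∈ range j, (u.choose (i + 1) : ℤ) *
        ∑ l ∈ range (j - (i + 1)), (δ.choose (l + 1) : ℤ) * t.choose (j - (i + 1) - (l + 1)) := by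
  rw [secondDiff, Nat.cast_choose_add_sub_cast_choose, Nat.cast_choose_add_sub_cast_choose,
    ← sum_sub_distrib]
  refine sum_congr rfl fun i _ => ?_
  rw [← mul_sub, Nat.cast_choose_add_sub_cast_choose]

def binomialSum (p d e t : ℕ) : ℤ :=
  ∑ j ∈ Icc 2 d, (t.choose j : ℤ) * (p : ℤ) ^ ((j - 2) * e)

theorem pow_dvd_pow_mul_choose_pow {p e k i j : ℕ} (hp : p.Prime) (hp3 : 3 ≤ p) (he : 1 ≤ e)
    (hi : i ≠ 0) (hij : i ≤ j) (hj : 2 ≤ j) :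
    p ^ k ∣ p ^ ((j - 2) * e) * (p ^ k).choose i := by
  have hv := Nat.two_mul_factorization_add_one_le hp3 hi
  have hvj : i.factorization p ≤ (j - 2) * e :=
    le_trans (by omega) (Nat.le_mul_of_pos_right _ he)
  exact (hp.pow_dvd_pow_factorization_mul_choose dvd_rfl hi).trans
    (mul_dvd_mul_right (pow_dvd_pow p hvj) _)

theorem binomialSum_add_pow_modEq {p d e : ℕ} (hp : p.Prime) (hp3 : 3 ≤ p) (he : 1 ≤ e)
    (k t : ℕ) : binomialSum p d e (t + p ^ k) ≡ binomialSum p d e t [ZMOD (p : ℤ) ^ k] := by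
  refine (Int.modEq_iff_dvd.mpr ?_).symm
  rw [binomialSum, binomialSum, ← sum_sub_distrib]
  refine dvd_sum fun j hj => ?_
  rw [← sub_mul, Nat.cast_choose_add_sub_cast_choose, sum_mul]
  refine dvd_sum fun i hi => ?_
  have h := Int.natCast_dvd_natCast.mpr (pow_dvd_pow_mul_choose_pow hp hp3 he (k := k)
    i.succ_ne_zero (mem_range.mp hi) (mem_Icc.mp hj).1)
  push_cast at h
  exact (h.mul_right (t.choose (j - (i + 1)) : ℤ)).trans (dvd_of_eq (by ring))

theorem pow_dvd_pow_mul_choose_mul_choose {p e r s δ u l i j : ℕ} (hp : p.Prime)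
    (hp3 : 3 ≤ p) (he : 1 ≤ e) (hδ : p ^ r ∣ δ) (hu : p ^ s ∣ u)
    (hl : l ≠ 0) (hi : i ≠ 0) (hlij : l + i ≤ j) (hj : 3 ≤ j) :
    p ^ (r + s + 1) ∣ p ^ ((j - 2) * e) * (δ.choose l * u.choose i) := by
  have hvl := Nat.two_mul_factorization_add_one_le hp3 hl
  have hvi := Nat.two_mul_factorization_add_one_le hp3 hi
  have hv : l.factorization p + i.factorization p + 1 ≤ (j - 2) * e :=
    le_trans (by omega) (Nat.le_mul_of_pos_right _ he)
  have h := mul_dvd_mul (hp.pow_dvd_pow_factorization_mul_choose hδ hl)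
    (hp.pow_dvd_pow_factorization_mul_choose hu hi)
  calc p ^ (r + s + 1) = p ^ r * p ^ s * p := by ring
    _ ∣ p ^ l.factorization p * δ.choose l * (p ^ i.factorization p * u.choose i) * p :=
      mul_dvd_mul_right h p
    _ = p ^ (l.factorization p + i.factorization p + 1) * (δ.choose l * u.choose i) := by ring
    _ ∣ p ^ ((j - 2) * e) * (δ.choose l * u.choose i) := mul_dvd_mul_right (pow_dvd_pow p hv) _

theorem secondDiff_binomialSum_modEq {p d e : ℕ} (hp : p.Prime) (hp3 : 3 ≤ p) (he : 1 ≤ e)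
    (hd : 2 ≤ d) {r s δ u : ℕ} (hδ : p ^ r ∣ δ) (hu : p ^ s ∣ u) (t : ℕ) :
    secondDiff (binomialSum p d e) δ u t ≡ u * δ [ZMOD (p : ℤ) ^ (r + s + 1)] := by
  have hsum : secondDiff (binomialSum p d e) δ u t =
      ∑ j ∈ Icc 2 d, secondDiff (fun t => (t.choose j : ℤ)) δ u t * (p : ℤ) ^ ((j - 2) * e) := by
    simp only [secondDiff, binomialSum, ← sum_sub_distrib, ← sub_mul]
  rw [hsum, ← insert_Icc_add_one_left_eq_Icc hd, sum_insert (by simp), secondDiff_cast_choose]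
  have hj2 : ∑ i ∈ range 2, (u.choose (i + 1) : ℤ) * ∑ l ∈ range (2 - (i + 1)),
      (δ.choose (l + 1) : ℤ) * t.choose (2 - (i + 1) - (l + 1)) = u * δ := by
    simp [sum_range_succ]
  rw [hj2, Nat.sub_self, zero_mul, pow_zero, mul_one]
  refine Int.add_modEq_left_iff.mpr (dvd_sum fun j hj => ?_)
  rw [secondDiff_cast_choose, sum_mul]
  refine dvd_sum fun i hi => ?_
  rw [mul_sum, sum_mul]
  refine dvd_sum fun l hl => ?_
  have hlij : l + 1 + (i + 1) ≤ j := by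
    have := mem_range.mp hi; have := mem_range.mp hl; omega
  have h := Int.natCast_dvd_natCast.mpr (pow_dvd_pow_mul_choose_mul_choose hp hp3 he hδ hu
    l.succ_ne_zero i.succ_ne_zero hlij (mem_Icc.mp hj).1)
  push_cast at h
  exact (h.mul_right (t.choose (j - (i + 1) - (l + 1)) : ℤ)).trans (dvd_of_eq (by ring))

def binomialExponent (p d e : ℕ) (a b c : ℤ) (t : ℕ) : ℤ :=
  a + b * t + c * binomialSum p d e t

theorem binomialExponent_add_pow_modEq {p d e : ℕ} (hp : p.Prime) (hp3 : 3 ≤ p) (he : 1 ≤ e)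
    (a b c : ℤ) (k t : ℕ) :
    binomialExponent p d e a b c (t + p ^ k) ≡
      binomialExponent p d e a b c t [ZMOD (p : ℤ) ^ k] := by
  have hlin : b * ((t + p ^ k : ℕ) : ℤ) ≡ b * t [ZMOD (p : ℤ) ^ k] := by
    rw [Nat.cast_add, Nat.cast_pow, mul_add, mul_comm b ((p : ℤ) ^ k)]
    exact Int.modEq_add_fac_self
  exact (hlin.add_left a).add ((binomialSum_add_pow_modEq hp hp3 he k t).mul_left c)

theorem exists_secondDiff_binomialExponent_modEq {p d e k : ℕ} (hp : p.Prime) (hp3 : 3 ≤ p)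
    (he : 1 ≤ e) (hd : 2 ≤ d) (a b : ℤ) {c : ℤ} (hc : Int.gcd c p = 1) {u : ℕ} (hu0 : 0 < u)
    (huk : u < p ^ k) :
    ∃ δ D, ¬ (p : ℤ) ^ k ∣ D ∧
      ∀ t, secondDiff (binomialExponent p d e a b c) δ u t ≡ D [ZMOD (p : ℤ) ^ k] := by
  set s := u.factorization p
  have hs : s < k := (Nat.pow_lt_pow_iff_right hp.one_lt).mp
    ((Nat.le_of_dvd hu0 (Nat.ordProj_dvd u p)).trans_lt huk)
  obtain ⟨r, rfl⟩ : ∃ r, k = r + s + 1 := ⟨k - s - 1, by omega⟩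
  refine ⟨p ^ r, c * (u * (p ^ r : ℕ)), fun hdvd => ?_, fun t => ?_⟩
  · -- `p ^ (r + s + 1) ∣ c u p ^ r` would force `p ^ (s + 1) ∣ u`
    have hdvd' : (p : ℤ) ^ r * p ^ (s + 1) ∣ (p : ℤ) ^ r * (c * u) := by
      convert hdvd using 1 <;> push_cast <;> ring
    have hcu := (mul_dvd_mul_iff_left (pow_ne_zero r (by exact_mod_cast hp.ne_zero))).mp hdvd'
    have hcop : IsCoprime ((p : ℤ) ^ (s + 1)) c :=
      (Int.isCoprime_iff_gcd_eq_one.mpr hc).symm.pow_left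
    exact Nat.pow_succ_factorization_not_dvd hu0.ne' hp
      (by exact_mod_cast hcop.dvd_of_dvd_mul_left hcu)
  · convert (secondDiff_binomialSum_modEq hp hp3 he hd dvd_rfl (Nat.ordProj_dvd u p) t).mul_left c
      using 1
    simp only [secondDiff, binomialExponent]
    push_cast
    ring

theorem IsPrimitiveRoot.finrank_adjoin_rat {ζ : ℂ} {n : ℕ} (hζ : IsPrimitiveRoot ζ n)
    (hn : 0 < n) : Module.finrank ℚ ℚ⟮ζ⟯ = n.totient := by
  rw [IntermediateField.adjoin.finrank (hζ.isIntegral hn).tower_top,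
    ← Polynomial.cyclotomic_eq_minpoly_rat hζ hn, Polynomial.natDegree_cyclotomic]

theorem IsPrimitiveRoot.algebraMap_norm_adjoin_eq_of_secondDiff_modEq {ζ : ℂ} {N : ℕ}
    (hζ : IsPrimitiveRoot ζ N) (hN : 2 < N) {g : ℕ → ℤ} (hper : ∀ t, g (t + N) ≡ g t [ZMOD N])
    (hdiff : ∀ u, 0 < u → u < N → ∃ δ D, ¬ (N : ℤ) ∣ D ∧ ∀ t, secondDiff g δ u t ≡ D [ZMOD N])
    (S : ℚ⟮ζ⟯) (hS : (S : ℂ) = ∑ t ∈ range N, ζ ^ g t) :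
    algebraMap ℚ ℂ (Algebra.norm ℚ S) = ((√N : ℝ) : ℂ) ^ N.totient := by
  have hN0 : 0 < N := by omega
  have : FiniteDimensional ℚ ℚ⟮ζ⟯ :=
    IntermediateField.adjoin.finiteDimensional (hζ.isIntegral hN0).tower_top
  have hgen : IsPrimitiveRoot (AdjoinSimple.gen ℚ ζ) N :=
    IsPrimitiveRoot.of_map_of_injective (f := algebraMap ℚ⟮ζ⟯ ℂ) hζ
      (algebraMap ℚ⟮ζ⟯ ℂ).injective
  have hσ : ∀ σ : ℚ⟮ζ⟯ →ₐ[ℚ] ℂ, IsPrimitiveRoot (σ (AdjoinSimple.gen ℚ ζ)) N :=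
    fun σ => hgen.map_of_injective σ.injective
  have hS' : S = ∑ t ∈ range N, AdjoinSimple.gen ℚ ζ ^ g t :=
    Subtype.ext (by rw [hS]; push_cast; rfl)
  rw [← hζ.finrank_adjoin_rat hN0]
  refine Algebra.algebraMap_norm_eq_sqrt_pow_of_mul_conj S (by positivity) (fun σ => ?_)
    fun σ h => (hσ σ).conj_ne_self hN (DFunLike.congr_fun h _)
  simp only [hS', map_sum σ, map_zpow₀ σ, Complex.ofReal_natCast]
  exact (hσ σ).sum_zpow_mul_conj_eq hper hdiff

theorem stmt14_general (p k d e : ℕ) (hp : p.Prime) (hodd : p ≠ 2)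
    (hd : 2 ≤ d) (he : 1 ≤ e) (hk : 1 ≤ k) (a b c : ℤ)
    (hc : Int.gcd c (p : ℤ) = 1)
    (ζ : ℂ) (hζ : IsPrimitiveRoot ζ (p ^ k)) :
    Algebra.norm ℚ
        (⟨∑ t ∈ Finset.range (p ^ k),
            ζ ^ (a + b * (t : ℤ) +
              c * ∑ j ∈ Finset.Icc 2 d, (t.choose j : ℤ) * (p : ℤ) ^ ((j - 2) * e)),
          sum_mem fun t _ =>
            IF.zpow_mem _ (IntermediateField.subset_adjoin ℚ {ζ} rfl) _⟩ :
          ↥(IntermediateField.adjoin ℚ {ζ})) =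
      (p : ℚ) ^ (k * (p - 1) * p ^ (k - 1) / 2) := by
  suffices h : ∀ S : ℚ⟮ζ⟯, (S : ℂ) = ∑ t ∈ range (p ^ k), ζ ^ binomialExponent p d e a b c t →
      Algebra.norm ℚ S = (p : ℚ) ^ (k * (p - 1) * p ^ (k - 1) / 2) from h _ rfl
  intro S hS
  have hp3 : 3 ≤ p := by have := hp.two_le; omega
  have hN : 2 < p ^ k := lt_of_lt_of_le hp3 (Nat.le_self_pow (by omega) p)
  obtain ⟨m, hm⟩ := Nat.Odd.sub_odd (hp.odd_of_ne_two hodd) odd_one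
  have hexp : k * (p - 1) * p ^ (k - 1) / 2 = k * (m * p ^ (k - 1)) := by
    rw [hm, show k * (m + m) * p ^ (k - 1) = 2 * (k * (m * p ^ (k - 1))) by ring,
      Nat.mul_div_cancel_left _ two_pos]
  apply (algebraMap ℚ ℂ).injective
  rw [hζ.algebraMap_norm_adjoin_eq_of_secondDiff_modEq hN
      (fun t => by exact_mod_cast binomialExponent_add_pow_modEq (d := d) hp hp3 he a b c k t)
      (fun u hu0 huN => by
        exact_mod_cast exists_secondDiff_binomialExponent_modEq hp hp3 he hd a b hc hu0 huN)
      S hS,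
    hexp, Nat.totient_prime_pow hp hk, hm,
    show p ^ (k - 1) * (m + m) = 2 * (m * p ^ (k - 1)) by ring, pow_mul, ← Complex.ofReal_pow,
    Real.sq_sqrt (by positivity)]
  push_cast
  ring

/-- Let `p` be an odd prime, `a, b, c, d, e, k ∈ ℤ` with `d ≥ 2`,
`e, k ≥ 1`, `gcd(c,p) = 1`, and `e ≥ 2` if `p = 3`.  Let `ζ` be a primitive `p^k`-th root
of unity and `g(t) = a + bt + c·Σ_{j=2}^{d} C(t,j)·p^{(j−2)e}`.  Then
`N_{ℚ(ζ)/ℚ}(Σ_{t<p^k} ζ^{g(t)}) = p^{k(p−1)p^{k−1}/2}`. -/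
theorem stmt14 (p k d e : ℕ) (hp : p.Prime) (hodd : p ≠ 2)
    (hd : 2 ≤ d) (he : 1 ≤ e) (hk : 1 ≤ k) (a b c : ℤ)
    (hc : Int.gcd c (p : ℤ) = 1) (h3 : p = 3 → 2 ≤ e)
    (ζ : ℂ) (hζ : IsPrimitiveRoot ζ (p ^ k)) :
    Algebra.norm ℚ
        (⟨∑ t ∈ Finset.range (p ^ k),
            ζ ^ (a + b * (t : ℤ) +
              c * ∑ j ∈ Finset.Icc 2 d, (t.choose j : ℤ) * (p : ℤ) ^ ((j - 2) * e)),
          sum_mem fun t _ =>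
            IF.zpow_mem _ (IntermediateField.subset_adjoin ℚ {ζ} rfl) _⟩ :
          ↥(IntermediateField.adjoin ℚ {ζ})) =
      (p : ℚ) ^ (k * (p - 1) * p ^ (k - 1) / 2) :=
  stmt14_general p k d e hp hodd hd he hk a b c hc ζ hζ

end
end
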